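/- arXiv:2401.14098 — 11 statements merged into one kernel-verified Lean document; each statement's English description precedes it below -/
import Mathlib

section
/- (Lemma 1, stuck-at-1 propagation to the next bit.) Let k ≥ 2 and let x, y < 2^(k+1) with z = (x + y) mod 2^(k+1). Suppose the stuck-at-1 fault at position k−2 of the share x is active, i.e. Nat.testBit x (k−2) = false, and let z* = ((x + 2^(k−2)) + y) mod 2^(k+1). Then Nat.testBit z* (k−1) ≠ Nat.testBit z (k−1) if and only if Nat.testBit z (k−2) = true. -/
/-! The fault adds `2 ^ (k - 2)` to the sum `x + y`. Such an addition flips bit `k - 1` exactly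
when it carries out of bit `k - 2`, i.e. when that bit of the sum is set, and reducing modulo
`2 ^ (k + 1)` leaves all bits below `k + 1` unchanged. -/

theorem Nat.testBit_succ_one_ne_iff (q : ℕ) :
    (q + 1).testBit 1 ≠ q.testBit 1 ↔ q.testBit 0 = true := by
  simp only [Nat.testBit_eq_decide_div_mod_eq, ne_eq, decide_eq_decide, decide_eq_true_eq]
  omega

theorem Nat.testBit_add_two_pow_succ_ne_iff (s m : ℕ) :
    (s + 2 ^ m).testBit (m + 1) ≠ s.testBit (m + 1) ↔ s.testBit m = true := by
  have shifted := Nat.testBit_succ_one_ne_iff (s / 2 ^ m)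
  rwa [← Nat.add_div_right s (Nat.two_pow_pos m), Nat.testBit_div_two_pow,
    Nat.testBit_div_two_pow, Nat.testBit_div_two_pow, Nat.zero_add, Nat.add_comm 1 m] at shifted

theorem stuck_at_one_propagates_to_next_bit_general (k : ℕ) (hk : 2 ≤ k)
    (x y : ℕ)
    (z : ℕ) (hz : z = (x + y) % 2 ^ (k + 1))
    (zstar : ℕ) (hzstar : zstar = ((x + 2 ^ (k - 2)) + y) % 2 ^ (k + 1)) :
    Nat.testBit zstar (k - 1) ≠ Nat.testBit z (k - 1) ↔
      Nat.testBit z (k - 2) = true := by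
  obtain ⟨m, rfl⟩ : ∃ m, k = m + 2 := ⟨k - 2, by omega⟩
  have hm : m + 2 - 1 = m + 1 := rfl
  subst hz hzstar
  simp only [Nat.add_sub_cancel, hm, add_right_comm x, Nat.testBit_mod_two_pow]
  simpa using Nat.testBit_add_two_pow_succ_ne_iff (x + y) m

/-- Lemma 1: an active stuck-at-1 fault at position `k-2` of the share `x`
propagates to bit `k-1` of the masked value `z` iff bit `k-2` of `z` is 1. -/
theorem stuck_at_one_propagates_to_next_bit (k : ℕ) (hk : 2 ≤ k)
    (x y : ℕ) (hx : x < 2 ^ (k + 1)) (hy : y < 2 ^ (k + 1))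
    (z : ℕ) (hz : z = (x + y) % 2 ^ (k + 1))
    (hactive : Nat.testBit x (k - 2) = false)
    (zstar : ℕ) (hzstar : zstar = ((x + 2 ^ (k - 2)) + y) % 2 ^ (k + 1)) :
    Nat.testBit zstar (k - 1) ≠ Nat.testBit z (k - 1) ↔
      Nat.testBit z (k - 2) = true :=
  stuck_at_one_propagates_to_next_bit_general k hk x y z hz zstar hzstar
end

section
/- (Lemma 2, stuck-at-1 propagation to the most significant bit.) Let k ≥ 2 and let x, y < 2^(k+1) with z = (x + y) mod 2^(k+1). Suppose Nat.testBit x (k−2) = false and let z* = ((x + 2^(k−2)) + y) mod 2^(k+1). Then Nat.testBit z* k ≠ Nat.testBit z k if and only if Nat.testBit z (k−2) = true and Nat.testBit z (k−1) = true. -/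
/-!
Adding `2 ^ (k - 2)` increments the number formed by the bits of `x + y` from position `k - 2`
on, and an increment flips bit `i` exactly when the carry runs through all bits below `i`.
Reducing modulo `2 ^ (k + 1)` leaves bits `0, …, k` untouched.
-/

theorem Nat.testBit_succ_ne_iff (v i : ℕ) :
    (v + 1).testBit i ≠ v.testBit i ↔ ∀ j < i, v.testBit j := by
  induction i generalizing v with
  | zero => simp [Nat.testBit_zero]; omega
  | succ i ih =>
    rw [Nat.forall_lt_succ_left']
    simp only [Nat.testBit_succ, Nat.testBit_zero]
    obtain ⟨a, rfl | rfl⟩ := Nat.even_or_odd' v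
    · have hsucc : (2 * a + 1) / 2 = a := by omega
      have hv : 2 * a / 2 = a := by omega
      simp [hsucc, hv]
    · have hsucc : (2 * a + 1 + 1) / 2 = a + 1 := by omega
      have hv : (2 * a + 1) / 2 = a := by omega
      simp [hsucc, hv, ih]

theorem Nat.testBit_add_two_pow_ne_iff (w m i : ℕ) :
    (w + 2 ^ m).testBit (m + i) ≠ w.testBit (m + i) ↔ ∀ j < i, w.testBit (m + j) := by
  simp only [add_comm m, ← Nat.testBit_div_two_pow, Nat.add_div_right w (Nat.two_pow_pos m)]
  exact Nat.testBit_succ_ne_iff _ _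

theorem stuck_at_one_propagates_to_msb_general (k : ℕ) (hk : 2 ≤ k)
    (x y : ℕ)
    (z : ℕ) (hz : z = (x + y) % 2 ^ (k + 1))
    (zstar : ℕ) (hzstar : zstar = ((x + 2 ^ (k - 2)) + y) % 2 ^ (k + 1)) :
    Nat.testBit zstar k ≠ Nat.testBit z k ↔
      (Nat.testBit z (k - 2) = true ∧ Nat.testBit z (k - 1) = true) := by
  obtain ⟨m, rfl⟩ : ∃ m, k = m + 2 := ⟨k - 2, by omega⟩
  rw [Nat.add_right_comm] at hzstar
  subst hz hzstar
  have hmod : ∀ w j, j < m + 2 + 1 → (w % 2 ^ (m + 2 + 1)).testBit j = w.testBit j := by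
    intro w j hj
    simp [Nat.testBit_mod_two_pow, hj]
  rw [hmod _ _ (by omega), hmod _ _ (by omega), hmod _ _ (by omega), hmod _ _ (by omega),
    Nat.add_sub_cancel, show m + 2 - 1 = m + 1 by omega, Nat.testBit_add_two_pow_ne_iff]
  exact ⟨fun h => ⟨h 0 two_pos, h 1 one_lt_two⟩,
    fun ⟨h0, h1⟩ j hj => by interval_cases j <;> assumption⟩

/-- Lemma 2: an active stuck-at-1 fault at position `k-2` of the share `x`
propagates to the most significant bit `k` of the masked value `z` iff
bits `k-2` and `k-1` of `z` are both 1. -/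
theorem stuck_at_one_propagates_to_msb (k : ℕ) (hk : 2 ≤ k)
    (x y : ℕ) (hx : x < 2 ^ (k + 1)) (hy : y < 2 ^ (k + 1))
    (z : ℕ) (hz : z = (x + y) % 2 ^ (k + 1))
    (hactive : Nat.testBit x (k - 2) = false)
    (zstar : ℕ) (hzstar : zstar = ((x + 2 ^ (k - 2)) + y) % 2 ^ (k + 1)) :
    Nat.testBit zstar k ≠ Nat.testBit z k ↔
      (Nat.testBit z (k - 2) = true ∧ Nat.testBit z (k - 1) = true) :=
  stuck_at_one_propagates_to_msb_general k hk x y z hz zstar hzstar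
end

section
/- (Stuck-at-0 analogue of Lemma 1.) Let k ≥ 2 and let x, y < 2^(k+1) with z = (x + y) mod 2^(k+1). Suppose the stuck-at-0 fault at position k−2 of the share x is active, i.e. Nat.testBit x (k−2) = true, and let z* = ((x − 2^(k−2)) + y) mod 2^(k+1). Then Nat.testBit z* (k−1) ≠ Nat.testBit z (k−1) if and only if Nat.testBit z (k−2) = false. -/
/-!
Reduction modulo `2 ^ (k + 1)` does not touch bits `k - 2` and `k - 1`, and before reduction
`x + y = (x - 2 ^ (k - 2) + y) + 2 ^ (k - 2)`. Adding `2 ^ p` flips bit `p` and carries into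
bit `p + 1` exactly when bit `p` was set, i.e. exactly when bit `p` of the sum is clear.
-/

namespace Nat

theorem testBit_one_succ (u : ℕ) : (u + 1).testBit 1 = (u.testBit 1 ^^ u.testBit 0) := by
  simp only [testBit_eq_decide_div_mod_eq, Nat.pow_one, Nat.pow_zero, Nat.div_one]
  by_cases h1 : u / 2 % 2 = 1 <;> by_cases h0 : u % 2 = 1 <;> simp [h1, h0] <;> omega

theorem testBit_add_two_pow_succ (v p : ℕ) :
    (v + 2 ^ p).testBit (p + 1) = (v.testBit (p + 1) ^^ v.testBit p) := by
  have hdiv : (v + 2 ^ p) / 2 ^ p = v / 2 ^ p + 1 := Nat.add_div_right v (Nat.two_pow_pos p)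
  rw [add_comm p 1, testBit_add, testBit_add, hdiv, testBit_one_succ, testBit_div_two_pow,
    testBit_div_two_pow, zero_add]

end Nat

theorem stuck_at_zero_propagates_to_next_bit_general (k : ℕ) (hk : 2 ≤ k)
    (x y : ℕ)
    (z : ℕ) (hz : z = (x + y) % 2 ^ (k + 1))
    (hactive : Nat.testBit x (k - 2) = true)
    (zstar : ℕ) (hzstar : zstar = ((x - 2 ^ (k - 2)) + y) % 2 ^ (k + 1)) :
    Nat.testBit zstar (k - 1) ≠ Nat.testBit z (k - 1) ↔
      Nat.testBit z (k - 2) = false := by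
  obtain ⟨p, rfl⟩ : ∃ p, k = p + 2 := ⟨k - 2, by omega⟩
  simp only [Nat.add_sub_cancel, show p + 2 - 1 = p + 1 from rfl] at hactive hzstar ⊢
  have hsum : x + y = (x - 2 ^ p + y) + 2 ^ p := by
    have := Nat.ge_two_pow_of_testBit hactive
    omega
  subst hz hzstar
  rw [Nat.testBit_mod_two_pow, Nat.testBit_mod_two_pow, Nat.testBit_mod_two_pow, hsum,
    Nat.testBit_add_two_pow_succ, add_comm _ (2 ^ p), Nat.testBit_two_pow_add_eq]
  cases (x - 2 ^ p + y).testBit (p + 1) <;> cases (x - 2 ^ p + y).testBit p <;> simp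

/-- Stuck-at-0 analogue of Lemma 1: an active stuck-at-0 fault at position
`k-2` of the share `x` propagates to bit `k-1` of `z` iff bit `k-2` of `z`
is 0. -/
theorem stuck_at_zero_propagates_to_next_bit (k : ℕ) (hk : 2 ≤ k)
    (x y : ℕ) (hx : x < 2 ^ (k + 1)) (hy : y < 2 ^ (k + 1))
    (z : ℕ) (hz : z = (x + y) % 2 ^ (k + 1))
    (hactive : Nat.testBit x (k - 2) = true)
    (zstar : ℕ) (hzstar : zstar = ((x - 2 ^ (k - 2)) + y) % 2 ^ (k + 1)) :
    Nat.testBit zstar (k - 1) ≠ Nat.testBit z (k - 1) ↔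
      Nat.testBit z (k - 2) = false :=
  stuck_at_zero_propagates_to_next_bit_general k hk x y z hz hactive zstar hzstar
end

section
/- (Stuck-at-0 analogue of Lemma 2.) Let k ≥ 2 and let x, y < 2^(k+1) with z = (x + y) mod 2^(k+1). Suppose Nat.testBit x (k−2) = true and let z* = ((x − 2^(k−2)) + y) mod 2^(k+1). Then Nat.testBit z* k ≠ Nat.testBit z k if and only if Nat.testBit z (k−2) = false and Nat.testBit z (k−1) = false. -/
/-! Since bit `k - 2` of `x` is set, `x - 2 ^ (k - 2)` does not underflow, so the faulted sum is
`z - 2 ^ (k - 2)` modulo `2 ^ (k + 1)`. Subtracting `2 ^ j` modulo `2 ^ (n + 1)` flips bit `n`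
exactly when the borrow runs through all of bits `j, …, n - 1`, i.e. when `z % 2 ^ n < 2 ^ j`;
for `j = n - 2` this says that bits `n - 2` and `n - 1` of `z` are both zero. -/

namespace Nat

theorem mod_two_pow_succ_eq_add_testBit (z n : ℕ) :
    z % 2 ^ (n + 1) = z % 2 ^ n + 2 ^ n * (z.testBit n).toNat := by
  rw [mod_pow_succ, toNat_testBit]

theorem testBit_eq_decide_two_pow_le {w n : ℕ} (hw : w < 2 ^ (n + 1)) :
    w.testBit n = decide (2 ^ n ≤ w) := by
  rw [Bool.eq_iff_iff, decide_eq_true_iff]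
  refine ⟨ge_two_pow_of_testBit, fun h => ?_⟩
  have hlow : w - 2 ^ n < 2 ^ n := by rw [Nat.pow_succ] at hw; omega
  rw [← Nat.add_sub_cancel' h, testBit_two_pow_add_eq, testBit_lt_two_pow hlow, Bool.not_false]

theorem mod_two_pow_add_lt_two_pow_iff (z j i : ℕ) :
    z % 2 ^ (j + i) < 2 ^ j ↔ ∀ l < i, z.testBit (j + l) = false := by
  induction i with
  | zero => simpa using mod_lt z (Nat.two_pow_pos j)
  | succ i ih =>
    have hle : 2 ^ j ≤ 2 ^ (j + i) := Nat.pow_le_pow_right two_pos (le_add_right j i)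
    rw [forall_lt_succ_right, ← ih, ← Nat.add_assoc, mod_two_pow_succ_eq_add_testBit]
    cases z.testBit (j + i)
    · simp only [Bool.toNat_false, Nat.mul_zero, Nat.add_zero, and_true]
    · simp only [Bool.toNat_true, Nat.mul_one, Bool.true_eq_false, and_false, iff_false, not_lt]
      omega

theorem testBit_add_two_pow_sub_two_pow_mod_ne_iff {z j n : ℕ} (hj : j ≤ n)
    (hz : z < 2 ^ (n + 1)) :
    ((z + (2 ^ (n + 1) - 2 ^ j)) % 2 ^ (n + 1)).testBit n ≠ z.testBit n ↔
      z % 2 ^ n < 2 ^ j := by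
  have hjn : 2 ^ j ≤ 2 ^ n := Nat.pow_le_pow_right two_pos hj
  rw [testBit_eq_decide_two_pow_le hz, testBit_eq_decide_two_pow_le (mod_lt _ (Nat.two_pow_pos _)),
    ne_eq, decide_eq_decide, Nat.pow_succ]
  rw [Nat.pow_succ] at hz
  -- `omega` does not relate `2 ^ j` and `2 ^ n` reliably, so make them atoms.
  generalize 2 ^ j = Q at *
  generalize 2 ^ n = P at *
  have hlow : z % P = if P ≤ z then z - P else z := by
    split_ifs with hzP
    · rw [mod_eq_sub_mod hzP, mod_eq_of_lt (by omega)]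
    · exact mod_eq_of_lt (by omega)
  have hw : (z + (P * 2 - Q)) % (P * 2) = if Q ≤ z then z - Q else z + (P * 2 - Q) := by
    split_ifs with hzQ
    · rw [show z + (P * 2 - Q) = z - Q + P * 2 by omega, add_mod_right, mod_eq_of_lt (by omega)]
    · exact mod_eq_of_lt (by omega)
  rw [hlow, hw]
  split_ifs <;> omega

theorem sub_add_mod_eq_mod_add_sub {x y b M : ℕ} (hbx : b ≤ x) (hbM : b ≤ M) :
    (x - b + y) % M = ((x + y) % M + (M - b)) % M := by
  rw [mod_add_mod, ← add_mod_right, show x - b + y + M = x + y + (M - b) by omega]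

end Nat

theorem stuck_at_zero_propagates_to_msb_general (k : ℕ) (hk : 2 ≤ k)
    (x y : ℕ)
    (z : ℕ) (hz : z = (x + y) % 2 ^ (k + 1))
    (hactive : Nat.testBit x (k - 2) = true)
    (zstar : ℕ) (hzstar : zstar = ((x - 2 ^ (k - 2)) + y) % 2 ^ (k + 1)) :
    Nat.testBit zstar k ≠ Nat.testBit z k ↔
      (Nat.testBit z (k - 2) = false ∧ Nat.testBit z (k - 1) = false) := by
  obtain ⟨m, rfl⟩ : ∃ m, k = m + 2 := ⟨k - 2, by omega⟩
  simp only [Nat.add_sub_cancel, show m + 2 - 1 = m + 1 by omega] at hactive hzstar ⊢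
  have hzlt : z < 2 ^ (m + 2 + 1) := hz ▸ Nat.mod_lt _ (Nat.two_pow_pos _)
  rw [hzstar, Nat.sub_add_mod_eq_mod_add_sub (Nat.ge_two_pow_of_testBit hactive)
      (Nat.pow_le_pow_right two_pos (by omega)), ← hz,
    Nat.testBit_add_two_pow_sub_two_pow_mod_ne_iff (by omega) hzlt,
    Nat.mod_two_pow_add_lt_two_pow_iff]
  refine ⟨fun h => ⟨h 0 (by omega), h 1 (by omega)⟩, fun ⟨h0, h1⟩ l hl => ?_⟩
  obtain rfl | rfl : l = 0 ∨ l = 1 := by omega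
  exacts [h0, h1]

/-- Stuck-at-0 analogue of Lemma 2: an active stuck-at-0 fault at position
`k-2` of the share `x` propagates to the most significant bit `k` of `z` iff
bits `k-2` and `k-1` of `z` are both 0. -/
theorem stuck_at_zero_propagates_to_msb (k : ℕ) (hk : 2 ≤ k)
    (x y : ℕ) (hx : x < 2 ^ (k + 1)) (hy : y < 2 ^ (k + 1))
    (z : ℕ) (hz : z = (x + y) % 2 ^ (k + 1))
    (hactive : Nat.testBit x (k - 2) = true)
    (zstar : ℕ) (hzstar : zstar = ((x - 2 ^ (k - 2)) + y) % 2 ^ (k + 1)) :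
    Nat.testBit zstar k ≠ Nat.testBit z k ↔
      (Nat.testBit z (k - 2) = false ∧ Nat.testBit z (k - 1) = false) :=
  stuck_at_zero_propagates_to_msb_general k hk x y z hz hactive zstar hzstar
end

section
/- (Stuck-at-1 activation and propagation count.) Let k ≥ 2 and let z < 2^(k+1). For each share value x ∈ [0, 2^(k+1)), set y = (z + 2^(k+1) − x) mod 2^(k+1) and z* = ((x + 2^(k−2)) + y) mod 2^(k+1). Then the cardinality of the set of x ∈ [0, 2^(k+1)) satisfying both Nat.testBit x (k−2) = false (the fault is active) and Nat.testBit z* (k−1) ≠ Nat.testBit z (k−1) (the fault propagates) equals 2^k if Nat.testBit z (k−2) = true, and equals 0 if Nat.testBit z (k−2) = false. -/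
/-!
Since `y = z - x` modulo `2^(k+1)`, the faulted sum `(x + 2^(k-2)) + y` is `z + 2^(k-2)`
whatever the share `x`. Adding `2^(k-2)` to `z` flips bit `k-1` exactly when the carry out
of bit `k-2` happens, i.e. when bit `k-2` of `z` is set. So propagation does not depend on `x`,
and the count is either zero or the number of `x` with bit `k-2` clear, which is half of all
shares.
-/

open Finset

theorem Nat.add_one_testBit_one (q : ℕ) :
    (q + 1).testBit 1 = (q.testBit 1 ^^ q.testBit 0) := by
  simp only [Nat.testBit_eq_decide_div_mod_eq, pow_one, pow_zero, Nat.div_one]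
  by_cases h0 : q % 2 = 1 <;> by_cases h1 : q / 2 % 2 = 1 <;> simp [h0, h1] <;> omega

theorem Nat.testBit_add_two_pow_succ_s7 (z m : ℕ) :
    (z + 2 ^ m).testBit (m + 1) = (z.testBit (m + 1) ^^ z.testBit m) := by
  have hdiv : (z + 2 ^ m) / 2 ^ m = z / 2 ^ m + 1 := Nat.add_div_right z (Nat.two_pow_pos m)
  rw [add_comm m, ← Nat.testBit_div_two_pow, hdiv, Nat.add_one_testBit_one,
    Nat.testBit_div_two_pow, Nat.testBit_div_two_pow, zero_add]

theorem Nat.card_filter_testBit_eq_false {n i : ℕ} (hi : i ≤ n) :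
    #{x ∈ range (2 ^ (n + 1)) | x.testBit i = false} = 2 ^ n := by
  have hlt : 2 ^ i < 2 ^ (n + 1) := Nat.pow_lt_pow_right (by norm_num) (by omega)
  have hflip : #{x ∈ range (2 ^ (n + 1)) | x.testBit i = false}
      = #{x ∈ range (2 ^ (n + 1)) | ¬x.testBit i = false} := by
    refine card_bij' (fun x _ => x ^^^ 2 ^ i) (fun x _ => x ^^^ 2 ^ i) ?_ ?_ ?_ ?_ <;>
      intro x hx <;> simp only [mem_filter, mem_range] at hx ⊢
    · exact ⟨Nat.xor_lt_two_pow hx.1 hlt, by simp [Nat.testBit_xor, hx.2]⟩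
    · exact ⟨Nat.xor_lt_two_pow hx.1 hlt, by simp_all [Nat.testBit_xor]⟩
    · exact Nat.xor_xor_cancel_right _ _
    · exact Nat.xor_xor_cancel_right _ _
  have htotal := card_filter_add_card_filter_not (s := range (2 ^ (n + 1)))
    (fun x => x.testBit i = false)
  rw [card_range, ← hflip] at htotal
  have := pow_succ 2 n
  omega

theorem Nat.add_add_sub_mod_of_lt {x N : ℕ} (c z : ℕ) (hx : x < N) :
    (x + c + (z + N - x) % N) % N = (z + c) % N := by
  rw [Nat.add_mod_mod, show x + c + (z + N - x) = z + c + N by omega, Nat.add_mod_right]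

theorem stuck_at_one_activation_propagation_count_general (k : ℕ) (hk : 2 ≤ k)
    (z : ℕ) :
    ((Finset.range (2 ^ (k + 1))).filter (fun x =>
        Nat.testBit x (k - 2) = false ∧
        Nat.testBit
          (((x + 2 ^ (k - 2)) + ((z + 2 ^ (k + 1) - x) % 2 ^ (k + 1)))
            % 2 ^ (k + 1)) (k - 1)
          ≠ Nat.testBit z (k - 1))).card =
      (if Nat.testBit z (k - 2) = true then 2 ^ k else 0) := by
  obtain ⟨m, rfl⟩ : ∃ m, k = m + 2 := ⟨k - 2, by omega⟩
  simp only [Nat.add_sub_cancel, show m + 2 - 1 = m + 1 by omega]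
  have hpropagates : ∀ x ∈ range (2 ^ (m + 2 + 1)),
      (x.testBit m = false ∧ ((x + 2 ^ m + (z + 2 ^ (m + 2 + 1) - x) % 2 ^ (m + 2 + 1))
        % 2 ^ (m + 2 + 1)).testBit (m + 1) ≠ z.testBit (m + 1))
      ↔ (x.testBit m = false ∧ z.testBit m = true) := by
    intro x hx
    rw [Nat.add_add_sub_mod_of_lt _ _ (mem_range.mp hx), Nat.testBit_mod_two_pow,
      Nat.testBit_add_two_pow_succ_s7]
    cases z.testBit m <;> simp
  rw [filter_congr hpropagates]
  cases z.testBit m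
  · simp
  · simpa using Nat.card_filter_testBit_eq_false (by omega)

/-- Stuck-at-1 activation and propagation count: over all `2^(k+1)` share
values `x` of `z`, the number of shares for which the stuck-at-1 fault at
position `k-2` is active and propagates to bit `k-1` equals `2^k` if bit
`k-2` of `z` is 1, and `0` otherwise. -/
theorem stuck_at_one_activation_propagation_count (k : ℕ) (hk : 2 ≤ k)
    (z : ℕ) (hz : z < 2 ^ (k + 1)) :
    ((Finset.range (2 ^ (k + 1))).filter (fun x =>
        Nat.testBit x (k - 2) = false ∧
        Nat.testBit
          (((x + 2 ^ (k - 2)) + ((z + 2 ^ (k + 1) - x) % 2 ^ (k + 1)))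
            % 2 ^ (k + 1)) (k - 1)
          ≠ Nat.testBit z (k - 1))).card =
      (if Nat.testBit z (k - 2) = true then 2 ^ k else 0) :=
  stuck_at_one_activation_propagation_count_general k hk z
end

section
/- (Higher-order masking version of Lemma 2.) Let k ≥ 2, let t be a natural number, and let x : Fin (t+1) → ℕ be t+1 arithmetic shares with z = (∑ i, x i) mod 2^(k+1). Suppose Nat.testBit (x 0) (k−2) = false and let z* = ((∑ i, x i) + 2^(k−2)) mod 2^(k+1) (the sum after the stuck-at-1 fault on share x 0). Then Nat.testBit z* k ≠ Nat.testBit z k if and only if Nat.testBit z (k−2) = true and Nat.testBit z (k−1) = true. In particular, the fault-propagation leakage is unaffected by the masking order t. -/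
/-!
Reduction modulo `2 ^ (k + 1)` leaves bits `0, …, k` untouched, so both `z` and `z*` can be read
off the plain sum of the shares, and the shares and the masking order enter only through that sum.
Adding `2 ^ (k - 2)` to it changes bit `k` exactly when the carry travels through bits `k - 2`
and `k - 1`, i.e. when both are set.
-/

theorem Nat.testBit_two_succ_ne_iff (q : ℕ) :
    (q + 1).testBit 2 ≠ q.testBit 2 ↔ q.testBit 0 = true ∧ q.testBit 1 = true := by
  simp only [Nat.testBit_eq_decide_div_mod_eq, ne_eq, decide_eq_decide, decide_eq_true_eq]
  omega

theorem Nat.testBit_add_two_pow_ne_iff_s8 (n p : ℕ) :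
    (n + 2 ^ p).testBit (p + 2) ≠ n.testBit (p + 2) ↔
      n.testBit p = true ∧ n.testBit (p + 1) = true := by
  have hdiv : (n + 2 ^ p) / 2 ^ p = n / 2 ^ p + 1 := Nat.add_div_right _ (Nat.two_pow_pos p)
  have shift : ∀ m i, m.testBit (i + p) = (m / 2 ^ p).testBit i :=
    fun m i => (Nat.testBit_div_two_pow m i).symm
  have shift0 : n.testBit p = (n / 2 ^ p).testBit 0 := by simpa using shift n 0
  rw [shift0, Nat.add_comm p, Nat.add_comm p, shift, shift, shift, hdiv]
  exact Nat.testBit_two_succ_ne_iff (n / 2 ^ p)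

theorem stuck_at_one_higher_order_masking_general (k t : ℕ) (hk : 2 ≤ k)
    (x : Fin (t + 1) → ℕ)
    (z : ℕ) (hz : z = (∑ i, x i) % 2 ^ (k + 1))
    (zstar : ℕ) (hzstar : zstar = ((∑ i, x i) + 2 ^ (k - 2)) % 2 ^ (k + 1)) :
    Nat.testBit zstar k ≠ Nat.testBit z k ↔
      (Nat.testBit z (k - 2) = true ∧ Nat.testBit z (k - 1) = true) := by
  obtain ⟨p, rfl⟩ : ∃ p, k = p + 2 := ⟨k - 2, by omega⟩
  subst hz hzstar
  have hlow : ∀ i < p + 2 + 1, ∀ n, (n % 2 ^ (p + 2 + 1)).testBit i = n.testBit i :=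
    fun i hi n => by simp [Nat.testBit_mod_two_pow, hi]
  rw [hlow _ (by omega), hlow _ (by omega), hlow _ (by omega), hlow _ (by omega),
    Nat.add_sub_cancel, show p + 2 - 1 = p + 1 by omega]
  exact Nat.testBit_add_two_pow_ne_iff_s8 _ p

/-- Higher-order masking version of Lemma 2: with `t+1` arithmetic shares of
`z`, an active stuck-at-1 fault at position `k-2` of the share `x 0`
propagates to the most significant bit `k` of `z` iff bits `k-2` and `k-1` of
`z` are both 1; the leakage is unaffected by the masking order `t`. -/
theorem stuck_at_one_higher_order_masking (k t : ℕ) (hk : 2 ≤ k)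
    (x : Fin (t + 1) → ℕ)
    (z : ℕ) (hz : z = (∑ i, x i) % 2 ^ (k + 1))
    (hactive : Nat.testBit (x 0) (k - 2) = false)
    (zstar : ℕ) (hzstar : zstar = ((∑ i, x i) + 2 ^ (k - 2)) % 2 ^ (k + 1)) :
    Nat.testBit zstar k ≠ Nat.testBit z k ↔
      (Nat.testBit z (k - 2) = true ∧ Nat.testBit z (k - 1) = true) :=
  stuck_at_one_higher_order_masking_general k t hk x z hz zstar hzstar
end

section
/- (Kyber, stuck-at-1 fault at the 11th bit.) Let x, y < 2^13 with z = (x + y) mod 2^13, and assume the Kyber message-bit condition Nat.testBit z 11 = Nat.testBit z 12. Suppose Nat.testBit x 10 = false (the stuck-at-1 fault at the 11th bit of the share is active) and let z* = ((x + 2^10) + y) mod 2^13. Then the decoded message bit is corrupted, i.e. Nat.testBit z* 12 ≠ Nat.testBit z 12, if and only if z ≥ 2^12 + 2^11 + 2^10 = 7168 (equivalently, z lies in {7168, …, 8191}). -/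
/-!
Adding `2 ^ n` to the register can change bit `n + 2` only through a carry out of bits `n` and
`n + 1`, i.e. exactly when both are set. The message condition makes bit `n + 2` equal to bit
`n + 1`, so the decoded bit flips exactly when the top three bits of the `(n + 3)`-bit register are
all set, i.e. `z ≥ 7 * 2 ^ n`. The fault on a share simply adds `2 ^ 10` to the unmasked value.
-/

namespace Nat

lemma testBit_succ_two_ne_iff_eq_seven {q : ℕ} (hq : q < 8) (hmsg : q.testBit 1 = q.testBit 2) :
    (q + 1).testBit 2 ≠ q.testBit 2 ↔ q = 7 := by
  revert hmsg
  interval_cases q <;> decide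

lemma testBit_add_two_pow_mod_ne_iff {z n : ℕ} (hz : z < 2 ^ (n + 3))
    (hmsg : z.testBit (n + 1) = z.testBit (n + 2)) :
    ((z + 2 ^ n) % 2 ^ (n + 3)).testBit (n + 2) ≠ z.testBit (n + 2) ↔ 7 * 2 ^ n ≤ z := by
  have hpos : 0 < 2 ^ n := Nat.two_pow_pos n
  have hq : z / 2 ^ n < 8 := Nat.div_lt_of_lt_mul (by rwa [pow_add] at hz)
  have hbit (m j : ℕ) : m.testBit (j + n) = (m / 2 ^ n).testBit j := (testBit_div_two_pow m j).symm
  rw [testBit_mod_two_pow, decide_eq_true (by omega), Bool.true_and, add_comm n 2, hbit, hbit,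
    Nat.add_div_right _ hpos, ← Nat.le_div_iff_mul_le hpos]
  rw [add_comm n 1, add_comm n 2, hbit, hbit] at hmsg
  rw [testBit_succ_two_ne_iff_eq_seven hq hmsg]
  omega

end Nat

theorem kyber_stuck_at_one_eleventh_bit_general
    (x y : ℕ)
    (z : ℕ) (hz : z = (x + y) % 2 ^ 13)
    (hmsg : Nat.testBit z 11 = Nat.testBit z 12)
    (zstar : ℕ) (hzstar : zstar = ((x + 2 ^ 10) + y) % 2 ^ 13) :
    Nat.testBit zstar 12 ≠ Nat.testBit z 12 ↔ 7168 ≤ z := by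
  have hfault : zstar = (z + 2 ^ 10) % 2 ^ 13 := by
    rw [hzstar, hz, Nat.mod_add_mod, Nat.add_right_comm]
  have hz_lt : z < 2 ^ 13 := hz ▸ Nat.mod_lt _ (by positivity)
  rw [hfault]
  exact Nat.testBit_add_two_pow_mod_ne_iff (n := 10) hz_lt hmsg

/-- Kyber, stuck-at-1 fault at the 11th bit (position 10): the decoded
message bit is corrupted iff `z ≥ 7168`. -/
theorem kyber_stuck_at_one_eleventh_bit
    (x y : ℕ) (hx : x < 2 ^ 13) (hy : y < 2 ^ 13)
    (z : ℕ) (hz : z = (x + y) % 2 ^ 13)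
    (hmsg : Nat.testBit z 11 = Nat.testBit z 12)
    (hactive : Nat.testBit x 10 = false)
    (zstar : ℕ) (hzstar : zstar = ((x + 2 ^ 10) + y) % 2 ^ 13) :
    Nat.testBit zstar 12 ≠ Nat.testBit z 12 ↔ 7168 ≤ z :=
  kyber_stuck_at_one_eleventh_bit_general x y z hz hmsg zstar hzstar
end

section
/- (General carry-propagation lemma.) Let N, p, j be natural numbers with p < j < N, let z < 2^N, and let z* = (z + 2^p) mod 2^N. Then Nat.testBit z* j ≠ Nat.testBit z j if and only if Nat.testBit z i = true for every i with p ≤ i < j. (This is the common generalization, by repeated application of Lemma 2, underlying Lemmas 1–3 and the claim that a fault reaching the 13th bit in a 16-bit register also reaches the 16th bit.) -/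
/-!
Dividing by `2 ^ p` shifts bit `p + k` to bit `k` and turns `z + 2 ^ p` into `z / 2 ^ p + 1`,
so only the increment `b ↦ b + 1` has to be understood. It flips bit `k` iff the carry reaches
it: bit `0` always flips, and halving gives `(b + 1) / 2 = b / 2` for even `b` (the carry dies)
and `(b + 1) / 2 = b / 2 + 1` for odd `b` (the carry moves one position up).
-/

theorem Nat.testBit_succ_ne_iff_s13 (b k : ℕ) :
    (b + 1).testBit k ≠ b.testBit k ↔ ∀ i < k, b.testBit i = true := by
  induction k generalizing b with
  | zero =>
    have hflip := Nat.testBit_two_pow_add_eq b 0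
    rw [pow_zero, Nat.add_comm] at hflip
    simp [hflip]
  | succ k ih =>
    rw [Nat.testBit_add_one, Nat.testBit_add_one]
    rcases Nat.mod_two_eq_zero_or_one b with heven | hodd
    · have hdiv : (b + 1) / 2 = b / 2 := by omega
      have hb0 : b.testBit 0 = false := by simp [Nat.testBit_zero, heven]
      simp only [hdiv, ne_eq, not_true_eq_false, false_iff, not_forall]
      exact ⟨0, k.succ_pos, by simp [hb0]⟩
    · have hdiv : (b + 1) / 2 = b / 2 + 1 := by omega
      have hb0 : b.testBit 0 = true := by simp [Nat.testBit_zero, hodd]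
      rw [hdiv, ih, Nat.forall_lt_succ_left, hb0]
      simp only [Nat.testBit_add_one, true_and]

theorem Nat.testBit_add_two_pow_ne_iff_s13 {z p j : ℕ} (hpj : p ≤ j) :
    (z + 2 ^ p).testBit j ≠ z.testBit j ↔ ∀ i, p ≤ i → i < j → z.testBit i = true := by
  obtain ⟨k, rfl⟩ := Nat.exists_eq_add_of_le' hpj
  have hquot : (z + 2 ^ p) / 2 ^ p = z / 2 ^ p + 1 :=
    Nat.add_div_right z (Nat.two_pow_pos p)
  rw [← Nat.testBit_div_two_pow, ← Nat.testBit_div_two_pow, hquot, Nat.testBit_succ_ne_iff_s13]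
  simp only [Nat.testBit_div_two_pow]
  constructor
  · intro h i hpi hik
    obtain ⟨i, rfl⟩ := Nat.exists_eq_add_of_le' hpi
    exact h i (by omega)
  · intro h i hik
    exact h (i + p) (by omega) (by omega)

theorem carry_propagation_general (N p j : ℕ) (hpj : p < j) (hjN : j < N)
    (z : ℕ)
    (zstar : ℕ) (hzstar : zstar = (z + 2 ^ p) % 2 ^ N) :
    Nat.testBit zstar j ≠ Nat.testBit z j ↔
      (∀ i, p ≤ i → i < j → Nat.testBit z i = true) := by
  rw [hzstar, Nat.testBit_mod_two_pow, decide_eq_true hjN, Bool.true_and]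
  exact Nat.testBit_add_two_pow_ne_iff_s13 hpj.le

/-- General carry-propagation lemma: adding `2^p` to `z` modulo `2^N` flips
bit `j` (with `p < j < N`) iff all bits of `z` in positions `p ≤ i < j` are
1. -/
theorem carry_propagation (N p j : ℕ) (hpj : p < j) (hjN : j < N)
    (z : ℕ) (hz : z < 2 ^ N)
    (zstar : ℕ) (hzstar : zstar = (z + 2 ^ p) % 2 ^ N) :
    Nat.testBit zstar j ≠ Nat.testBit z j ↔
      (∀ i, p ≤ i → i < j → Nat.testBit z i = true) :=
  carry_propagation_general N p j hpj hjN z zstar hzstar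
end

section
/- (Multi-bit stuck-at-1 faults on the 8 least significant bits do not corrupt the message bit.) Let x, y < 2^13 with z = (x + y) mod 2^13 and 6944 ≤ z ≤ 7776 (the high-probability range of a coefficient decoding to message bit 1). Then for every mask < 256, the faulted sum z* = ((x ||| mask) + y) mod 2^13 (where ||| is bitwise OR) still satisfies Nat.testBit z* 12 = true; i.e. the decoded message bit remains 1 and no decryption failure occurs. -/
/-! A stuck-at-1 fault on the low `k` bits of a share changes only those bits, so it raises the
share by less than `2 ^ k`. For `k = 8` the sum `z ≤ 7776` then grows by at most `255` without
wrapping modulo `2 ^ 13`, and stays in `[2 ^ 12, 2 ^ 13)`, where bit 12 is set. -/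

namespace Nat

theorem or_div_two_pow_of_lt {x m k : ℕ} (hm : m < 2 ^ k) : (x ||| m) / 2 ^ k = x / 2 ^ k := by
  simp only [← shiftRight_eq_div_pow, shiftRight_or_distrib, shiftRight_eq_zero _ _ hm, or_zero]

theorem or_lt_add_two_pow {x m k : ℕ} (hm : m < 2 ^ k) : x ||| m < x + 2 ^ k := by
  have hrem : (x ||| m) % 2 ^ k < 2 ^ k := mod_lt _ (by positivity)
  calc x ||| m = 2 ^ k * (x / 2 ^ k) + (x ||| m) % 2 ^ k := by
        rw [← or_div_two_pow_of_lt hm, div_add_mod]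
    _ < 2 ^ k * (x / 2 ^ k) + 2 ^ k := by omega
    _ ≤ x + 2 ^ k := by have := mul_div_le x (2 ^ k); omega

theorem add_add_mod_eq_mod_add_of_lt {a b d n : ℕ} (h : (a + b) % n + d < n) :
    (a + d + b) % n = (a + b) % n + d := by
  rw [add_right_comm, ← mod_add_mod, mod_eq_of_lt h]

end Nat

theorem lsb_stuck_at_one_no_corruption_general
    (x y : ℕ)
    (z : ℕ) (hz : z = (x + y) % 2 ^ 13)
    (hzlo : 6944 ≤ z) (hzhi : z ≤ 7776)
    (mask : ℕ) (hmask : mask < 256)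
    (zstar : ℕ) (hzstar : zstar = ((x ||| mask) + y) % 2 ^ 13) :
    Nat.testBit zstar 12 = true := by
  obtain ⟨d, hd⟩ : ∃ d, x ||| mask = x + d := Nat.exists_eq_add_of_le Nat.left_le_or
  have hd_lt : d < 2 ^ 8 := by
    have := Nat.or_lt_add_two_pow (x := x) (k := 8) hmask
    omega
  have hzstar_eq : zstar = z + d := by
    rw [hzstar, hd, hz]
    exact Nat.add_add_mod_eq_mod_add_of_lt (by omega)
  exact Nat.testBit_of_two_pow_le_and_two_pow_add_one_gt (by omega) (by omega)

/-- Multi-bit stuck-at-1 faults on the 8 least significant bits of a share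
do not corrupt the message bit when the coefficient lies in the
high-probability range `[6944, 7776]` for message bit 1. -/
theorem lsb_stuck_at_one_no_corruption
    (x y : ℕ) (hx : x < 2 ^ 13) (hy : y < 2 ^ 13)
    (z : ℕ) (hz : z = (x + y) % 2 ^ 13)
    (hzlo : 6944 ≤ z) (hzhi : z ≤ 7776)
    (mask : ℕ) (hmask : mask < 256)
    (zstar : ℕ) (hzstar : zstar = ((x ||| mask) + y) % 2 ^ 13) :
    Nat.testBit zstar 12 = true :=
  lsb_stuck_at_one_no_corruption_general x y z hz hzlo hzhi mask hmask zstar hzstar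
end

section
/- (Multi-bit stuck-at-0 faults on the 8 least significant bits do not corrupt the message bit.) Let x, y < 2^13 with z = (x + y) mod 2^13 and 6944 ≤ z ≤ 7776 (the high-probability range of a coefficient decoding to message bit 1). Then for every mask < 256, the faulted sum z* = ((x − (x &&& mask)) + y) mod 2^13 (where &&& is bitwise AND, so x − (x &&& mask) clears the masked low bits of x) still satisfies Nat.testBit z* 12 = true; i.e. the decoded message bit remains 1 and no decryption failure occurs. -/
/-! The fault lowers the share `x` by `d = x &&& mask ≤ 255`, and `d ≤ x`, so the faulted sum is
`x + y - d`. Since `z ≥ 6944 > 255`, the subtraction does not wrap around modulo `2 ^ 13`, hence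
`z* = z - d ∈ [6689, 7776] ⊆ [2 ^ 12, 2 ^ 13)`, where bit 12 is set. -/

theorem Nat.sub_add_mod_of_le_mod {x y d m : ℕ} (hdx : d ≤ x) (hd : d ≤ (x + y) % m) :
    (x - d + y) % m = (x + y) % m - d := by
  rw [Nat.mod_sub_of_le hd, Nat.sub_add_comm hdx]

theorem Nat.sub_and_add_mod_of_le_mod {x y mask m : ℕ} (h : mask ≤ (x + y) % m) :
    (x - (x &&& mask) + y) % m = (x + y) % m - (x &&& mask) :=
  Nat.sub_add_mod_of_le_mod Nat.and_le_left (Nat.and_le_right.trans h)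

theorem lsb_stuck_at_zero_no_corruption_general
    (x y : ℕ)
    (z : ℕ) (hz : z = (x + y) % 2 ^ 13)
    (hzlo : 6944 ≤ z) (hzhi : z ≤ 7776)
    (mask : ℕ) (hmask : mask < 256)
    (zstar : ℕ) (hzstar : zstar = ((x - (x &&& mask)) + y) % 2 ^ 13) :
    Nat.testBit zstar 12 = true := by
  have hd : x &&& mask < 256 := Nat.and_le_right.trans_lt hmask
  have hzstar_eq : zstar = z - (x &&& mask) := by
    rw [hzstar, hz, Nat.sub_and_add_mod_of_le_mod (by omega)]
  exact Nat.testBit_of_two_pow_le_and_two_pow_add_one_gt (by omega) (by omega)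

/-- Multi-bit stuck-at-0 faults on the 8 least significant bits of a share
do not corrupt the message bit when the coefficient lies in the
high-probability range `[6944, 7776]` for message bit 1. -/
theorem lsb_stuck_at_zero_no_corruption
    (x y : ℕ) (hx : x < 2 ^ 13) (hy : y < 2 ^ 13)
    (z : ℕ) (hz : z = (x + y) % 2 ^ 13)
    (hzlo : 6944 ≤ z) (hzhi : z ≤ 7776)
    (mask : ℕ) (hmask : mask < 256)
    (zstar : ℕ) (hzstar : zstar = ((x - (x &&& mask)) + y) % 2 ^ 13) :
    Nat.testBit zstar 12 = true :=
  lsb_stuck_at_zero_no_corruption_general x y z hz hzlo hzhi mask hmask zstar hzstar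
end

section
/- (Kyber decode correctness under bounded noise.) Let q = 3329 and ⌈q/2⌋ = 1665. For every m ∈ {0, 1} and every integer d with −832 ≤ d ≤ 831, let w ∈ [0, q) be the representative of (1665·m + d) mod q. Then Kyber's decode function recovers m: ((2·w + 1664) / 3329) mod 2 = m, where / denotes integer (floor) division. -/
/-!
Write `q = 2k + 1`, so that `Encode 1 = k + 1` and `Decode w` is the parity of
`⌊(2w + k) / q⌋`. The noise bound `-k ≤ 2d < k` keeps `2w + k` in `[0, q)` or in
`[2q, 3q)` when `m = 0` (depending on whether `d` wraps around modulo `q`), and in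
`[q, 2q)` when `m = 1`.
-/

def kyberEncode (q m : ℕ) : ℕ := (q + 1) / 2 * m

def kyberDecode (q w : ℕ) : ℕ := (2 * w + q / 2) / q % 2

section Decode

variable {q w : ℕ}

theorem kyberDecode_eq_zero_of_lt (h : 2 * w + q / 2 < q) : kyberDecode q w = 0 := by
  simp [kyberDecode, Nat.div_eq_of_lt h]

theorem kyberDecode_eq_zero_of_two_mul_le (h : 2 * q ≤ 2 * w + q / 2) (hw : w < q) :
    kyberDecode q w = 0 := by
  rw [kyberDecode, Nat.div_eq_of_lt_le (k := 2) (by omega) (by omega)]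

theorem kyberDecode_eq_one_of_le_of_lt (h₁ : q ≤ 2 * w + q / 2) (h₂ : 2 * w + q / 2 < 2 * q) :
    kyberDecode q w = 1 := by
  rw [kyberDecode, Nat.div_eq_of_lt_le (k := 1) (by omega) (by omega)]

end Decode

theorem kyberDecode_kyberEncode_add {q : ℕ} (hq : Odd q) {m : ℕ} (hm : m = 0 ∨ m = 1)
    {d : ℤ} (hd₁ : -((q / 2 : ℕ) : ℤ) ≤ 2 * d) (hd₂ : 2 * d < (q / 2 : ℕ))
    {w : ℕ} (hw : (w : ℤ) = (kyberEncode q m + d) % q) :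
    kyberDecode q w = m := by
  obtain ⟨k, rfl⟩ := hq
  rcases hm with rfl | rfl
  · simp only [kyberEncode, mul_zero, Nat.cast_zero, zero_add] at hw
    rcases le_or_gt 0 d with hd | hd
    · rw [Int.emod_eq_of_lt hd (by omega)] at hw
      exact kyberDecode_eq_zero_of_lt (by omega)
    · rw [← Int.add_emod_right, Int.emod_eq_of_lt (by omega) (by omega)] at hw
      exact kyberDecode_eq_zero_of_two_mul_le (by omega) (by omega)
  · rw [kyberEncode, Int.emod_eq_of_lt (by omega) (by omega)] at hw
    exact kyberDecode_eq_one_of_le_of_lt (by omega) (by omega)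

theorem kyber_decode_correct_general
    (m : ℕ) (hm : m = 0 ∨ m = 1)
    (d : ℤ) (hd1 : -832 ≤ d) (hd2 : d ≤ 831)
    (w : ℕ)
    (hw : (w : ℤ) = (1665 * (m : ℤ) + d) % 3329) :
    (2 * w + 1664) / 3329 % 2 = m :=
  kyberDecode_kyberEncode_add (q := 3329) (d := d) ⟨1664, rfl⟩ hm (by omega) (by omega)
    (by simpa [kyberEncode] using hw)

/-- Kyber decode correctness under bounded noise: for a message bit
`m ∈ {0, 1}` and decryption noise `d` with `-832 ≤ d ≤ 831`, the decode
function applied to the representative `w ∈ [0, q)` of `(1665*m + d) mod q`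
recovers `m` (with `q = 3329`). -/
theorem kyber_decode_correct
    (m : ℕ) (hm : m = 0 ∨ m = 1)
    (d : ℤ) (hd1 : -832 ≤ d) (hd2 : d ≤ 831)
    (w : ℕ) (hwlt : w < 3329)
    (hw : (w : ℤ) = (1665 * (m : ℤ) + d) % 3329) :
    (2 * w + 1664) / 3329 % 2 = m :=
  kyber_decode_correct_general m hm d hd1 hd2 w hw
end
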